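/- arXiv:2410.00169 — 4 statements merged into one kernel-verified Lean document; each statement's English description precedes it below -/
import Mathlib

section
/- For S ∈ ℝ^{n×m} with ν = min(n,m), the regularizer r(S) = (1/2)‖S‖₂² − (1/(2ν))‖S‖_F² equals 0 if and only if all ν singular values σ₁(S), …, σ_ν(S) of S are equal. -/
open Matrix

/-- The Gram matrix `Sᵀ * S` of a real matrix is Hermitian (symmetric). -/
theorem gram_isHermitian {n m : ℕ} (S : Matrix (Fin n) (Fin m) ℝ) :
    (Sᵀ * S).IsHermitian := by
  simpa [Matrix.conjTranspose_eq_transpose_of_trivial] using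
    Matrix.isHermitian_conjTranspose_mul_self S

/-- The singular values of a real `n × m` matrix `S`, in nonincreasing order:
the nonnegative square roots of the `min n m` largest eigenvalues of `Sᵀ * S`. -/
noncomputable def svals {n m : ℕ} (S : Matrix (Fin n) (Fin m) ℝ) :
    Fin (min n m) → ℝ := fun i =>
  Real.sqrt (((gram_isHermitian S).eigenvalues ∘
    Tuple.sort (gram_isHermitian S).eigenvalues)
      ⟨m - 1 - i, by have := i.isLt; omega⟩)

/-- The operator norm of a matrix induced by the Euclidean norms. -/
noncomputable def opNorm {n m : ℕ} (S : Matrix (Fin n) (Fin m) ℝ) : ℝ :=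
  ‖LinearMap.toContinuousLinearMap (Matrix.toEuclideanLin S)‖

/-- The Frobenius norm of a matrix. -/
noncomputable def frobNorm {n m : ℕ} (S : Matrix (Fin n) (Fin m) ℝ) : ℝ :=
  Real.sqrt (∑ i, ∑ j, (S i j) ^ 2)

/-- The regularizer `r(S) = (1/2)‖S‖₂² − (1/(2ν))‖S‖_F²` with `ν = min n m`. -/
noncomputable def reg {n m : ℕ} (S : Matrix (Fin n) (Fin m) ℝ) : ℝ :=
  (1 / 2) * opNorm S ^ 2 - (1 / (2 * (min n m : ℝ))) * frobNorm S ^ 2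

/-- The largest singular value of `S`. -/
noncomputable def sigmaMax {n m : ℕ} (S : Matrix (Fin n) (Fin m) ℝ) : ℝ :=
  ⨆ i, svals S i

/-- The smallest nonzero singular value of `S`. -/
noncomputable def sigmaMinPos {n m : ℕ} (S : Matrix (Fin n) (Fin m) ℝ) : ℝ :=
  sInf {x | (∃ i, svals S i = x) ∧ 0 < x}

/-- The condition number `κ(S) = σ_max(S) / σ_min>0(S)`. -/
noncomputable def kappa {n m : ℕ} (S : Matrix (Fin n) (Fin m) ℝ) : ℝ :=
  sigmaMax S / sigmaMinPos S

/-- The rectangular diagonal `n × m` matrix with diagonal entries `d`. -/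
noncomputable def diagRect {n m : ℕ} (d : Fin (min n m) → ℝ) :
    Matrix (Fin n) (Fin m) ℝ := Matrix.of fun i j =>
  if h : (i : ℕ) = (j : ℕ) then
    d ⟨i, by have := i.isLt; have := j.isLt; omega⟩ else 0


/-! The squared singular values are the top `min n m` eigenvalues of `Sᵀ * S`, and the
remaining eigenvalues vanish because `Sᵀ * S` has rank at most `n`. Hence
`‖S‖_F² = tr (Sᵀ * S) = ∑ σᵢ²`, while the C*-identity and unitary invariance of the spectral norm
give `‖S‖₂² = ‖Sᵀ * S‖₂ = σ₁²`. So `2ν · r(S) = ∑ (σ₁² - σᵢ²)` is a sum of nonnegative terms,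
which vanishes exactly when every `σᵢ` equals `σ₁`. -/

open scoped Matrix.Norms.L2Operator

theorem Matrix.IsHermitian.l2_opNorm_eq_norm_eigenvalues {𝕜 ι : Type*} [RCLike 𝕜] [Fintype ι]
    [DecidableEq ι] {A : Matrix ι ι 𝕜} (hA : A.IsHermitian) : ‖A‖ = ‖hA.eigenvalues‖ := by
  conv_lhs => rw [hA.spectral_theorem, Unitary.conjStarAlgAut_apply,
    CStarRing.norm_mul_mem_unitary _ (Unitary.star_mem hA.eigenvectorUnitary.2),
    CStarRing.norm_coe_unitary_mul, l2_opNorm_diagonal]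
  simp [Pi.norm_def]

theorem pi_norm_eq_of_forall_le {ι : Type*} [Fintype ι] {f : ι → ℝ} (hf : 0 ≤ f) {i : ι}
    (hi : ∀ j, f j ≤ f i) : ‖f‖ = f i :=
  le_antisymm ((pi_norm_le_iff_of_nonneg (hf i)).2 fun j => by
      rw [Real.norm_of_nonneg (hf j)]; exact hi j)
    ((le_abs_self _).trans (norm_le_pi_norm f i))

theorem sum_sq_eq_card_mul_sq_iff {ι : Type*} [Fintype ι] {f : ι → ℝ} {c : ℝ} (hf : 0 ≤ f)
    (hfc : ∀ i, f i ≤ c) : ∑ i, f i ^ 2 = Fintype.card ι * c ^ 2 ↔ ∀ i, f i = c := by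
  have hsq : ∀ i, f i ^ 2 ≤ c ^ 2 := fun i => pow_le_pow_left₀ (hf i) (hfc i) 2
  have hconst : (Fintype.card ι : ℝ) * c ^ 2 = ∑ _i : ι, c ^ 2 := by simp
  rw [hconst, Finset.sum_eq_sum_iff_of_le fun i _ => hsq i]
  simp only [Finset.mem_univ, true_implies]
  exact forall_congr' fun i => pow_left_inj₀ (hf i) ((hf i).trans (hfc i)) two_ne_zero

section Gram

variable {n m : ℕ} (S : Matrix (Fin n) (Fin m) ℝ)

theorem gram_posSemidef : (Sᵀ * S).PosSemidef := by
  simpa [Matrix.conjTranspose_eq_transpose_of_trivial] using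
    Matrix.posSemidef_conjTranspose_mul_self S

noncomputable def gramEigenvaluesSorted : Fin m → ℝ :=
  (gram_isHermitian S).eigenvalues ∘ Tuple.sort (gram_isHermitian S).eigenvalues

theorem gramEigenvaluesSorted_nonneg : 0 ≤ gramEigenvaluesSorted S := fun _ =>
  (gram_posSemidef S).eigenvalues_nonneg _

theorem gramEigenvaluesSorted_monotone : Monotone (gramEigenvaluesSorted S) :=
  Tuple.monotone_sort _

theorem sum_gramEigenvaluesSorted : ∑ j, gramEigenvaluesSorted S j = frobNorm S ^ 2 := by
  simp only [gramEigenvaluesSorted, Function.comp_apply]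
  rw [Equiv.sum_comp (Tuple.sort _) (gram_isHermitian S).eigenvalues,
    frobNorm, Real.sq_sqrt (by positivity), Finset.sum_comm]
  simpa [Matrix.trace, Matrix.mul_apply, sq] using
    ((gram_isHermitian S).trace_eq_sum_eigenvalues).symm

theorem gram_eigenvalues_le_gramEigenvaluesSorted_last (hm : 0 < m) (j : Fin m) :
    (gram_isHermitian S).eigenvalues j ≤ gramEigenvaluesSorted S ⟨m - 1, by omega⟩ := by
  obtain ⟨k, rfl⟩ := (Tuple.sort (gram_isHermitian S).eigenvalues).surjective j
  exact gramEigenvaluesSorted_monotone S (show (k : ℕ) ≤ m - 1 by omega)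

theorem opNorm_sq_eq_gramEigenvaluesSorted_last (hm : 0 < m) :
    opNorm S ^ 2 = gramEigenvaluesSorted S ⟨m - 1, by omega⟩ := by
  -- `opNorm` is by definition the norm of `Matrix.Norms.L2Operator`
  change ‖S‖ ^ 2 = _
  rw [sq, ← Matrix.l2_opNorm_conjTranspose_mul_self, Matrix.conjTranspose_eq_transpose_of_trivial,
    (gram_isHermitian S).l2_opNorm_eq_norm_eigenvalues]
  exact pi_norm_eq_of_forall_le (gram_posSemidef S).eigenvalues_nonneg
    (gram_eigenvalues_le_gramEigenvaluesSorted_last S hm)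

theorem card_gram_eigenvalues_ne_zero_le :
    Fintype.card {j // (gram_isHermitian S).eigenvalues j ≠ 0} ≤ n := by
  rw [← (gram_isHermitian S).rank_eq_card_non_zero_eigs, Matrix.rank_transpose_mul_self]
  simpa using Matrix.rank_le_card_height S

theorem gramEigenvaluesSorted_eq_zero (k : Fin m) (hk : k + n < m) :
    gramEigenvaluesSorted S k = 0 := by
  classical
  by_contra hne
  have hpos : ∀ j ∈ Finset.Ici k, gramEigenvaluesSorted S j ≠ 0 := fun j hj =>
    (((gramEigenvaluesSorted_nonneg S k).lt_of_ne' hne).trans_le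
      (gramEigenvaluesSorted_monotone S (Finset.mem_Ici.1 hj))).ne'
  have hcard : Fintype.card {j // gramEigenvaluesSorted S j ≠ 0} ≤ n :=
    (Fintype.card_congr ((Tuple.sort _).subtypeEquiv fun _ => Iff.rfl)).trans_le
      (card_gram_eigenvalues_ne_zero_le S)
  have := Finset.card_le_card (s := Finset.Ici k) fun j hj => Finset.mem_filter.2
    ⟨Finset.mem_univ j, hpos j hj⟩
  rw [Fin.card_Ici, ← Fintype.card_subtype] at this
  omega

theorem svals_sq (i : Fin (min n m)) :
    svals S i ^ 2 = gramEigenvaluesSorted S ⟨m - 1 - i, by omega⟩ :=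
  Real.sq_sqrt (gramEigenvaluesSorted_nonneg S _)

theorem svals_nonneg : 0 ≤ svals S := fun _ => Real.sqrt_nonneg _

theorem svals_antitone : Antitone (svals S) := fun i j hij =>
  Real.sqrt_le_sqrt <| gramEigenvaluesSorted_monotone S <|
    show m - 1 - (j : ℕ) ≤ m - 1 - i by have := Fin.le_def.1 hij; omega

theorem svals_le_svals_zero (h : 0 < min n m) (i : Fin (min n m)) : svals S i ≤ svals S ⟨0, h⟩ :=
  svals_antitone S (Fin.le_def.2 (Nat.zero_le i))

theorem sum_svals_sq : ∑ i, svals S i ^ 2 = frobNorm S ^ 2 := by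
  let e : Fin (min n m) → Fin m := fun i => ⟨m - 1 - i, by omega⟩
  have he : Function.Injective e := fun i j hij => by
    have := congrArg Fin.val hij
    simp only [e] at this
    ext; omega
  have hzero : ∀ k ∉ Set.range e, gramEigenvaluesSorted S k = 0 := fun k hk =>
    gramEigenvaluesSorted_eq_zero S k <| by_contra fun hkn =>
      hk ⟨⟨m - 1 - k, by omega⟩, Fin.ext (by simp only [e]; omega)⟩
  rw [← sum_gramEigenvaluesSorted]
  exact Fintype.sum_of_injective e he (fun i => svals S i ^ 2) _ hzero (svals_sq S)

theorem opNorm_eq_svals_zero (h : 0 < min n m) : opNorm S = svals S ⟨0, h⟩ := by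
  have hnonneg : 0 ≤ opNorm S := norm_nonneg _
  rw [← Real.sqrt_sq hnonneg, opNorm_sq_eq_gramEigenvaluesSorted_last S (by omega)]
  rfl

theorem reg_eq_zero_iff_sum_svals_sq (h : 0 < min n m) :
    reg S = 0 ↔ ∑ i, svals S i ^ 2 = ((min n m : ℕ) : ℝ) * svals S ⟨0, h⟩ ^ 2 := by
  rw [reg, sum_svals_sq, opNorm_eq_svals_zero S h, Nat.cast_min]
  have hν : (min (n : ℝ) m) ≠ 0 := by rw [← Nat.cast_min]; exact_mod_cast h.ne'
  field_simp
  constructor <;> intro h' <;> linarith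

end Gram

theorem reg_zero {n m : ℕ} : reg (0 : Matrix (Fin n) (Fin m) ℝ) = 0 := by
  simp [reg, frobNorm, opNorm]

/-- For `S ∈ ℝ^{n×m}` with `ν = min n m`, the regularizer
`r(S) = (1/2)‖S‖₂² − (1/(2ν))‖S‖_F²` equals `0` if and only if all `ν` singular
values `σ₁(S), …, σ_ν(S)` of `S` are equal. -/
theorem reg_eq_zero_iff_svals_equal {n m : ℕ} (S : Matrix (Fin n) (Fin m) ℝ) :
    reg S = 0 ↔ ∀ i j : Fin (min n m), svals S i = svals S j := by
  rcases Nat.eq_zero_or_pos (min n m) with h | h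
  · have hS : S = 0 := by
      rcases Nat.min_eq_zero_iff.1 h with rfl | rfl <;> exact Subsingleton.elim _ _
    exact ⟨fun _ i => (Fin.cast h i).elim0, fun _ => hS ▸ reg_zero⟩
  · have hsq := sum_sq_eq_card_mul_sq_iff (svals_nonneg S) (svals_le_svals_zero S h)
    rw [Fintype.card_fin] at hsq
    rw [reg_eq_zero_iff_sum_svals_sq S h, hsq]
    exact ⟨fun hc i j => (hc i).trans (hc j).symm, fun hc i => hc i _⟩
end

section
/- Let S ∈ ℝ^{n×m} with S ≠ 0, ν = min(n,m), and suppose rank S < ν. Then r(S) > 0. -/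
open Matrix

/-! The Gram matrix `SᵀS` has trace `‖S‖_F²`, rank `rank S` and operator norm `‖S‖₂²`. Its trace is
the sum of its eigenvalues, of which only `rank S` are nonzero and each is at most `‖S‖₂²`, so
`‖S‖_F² ≤ rank S · ‖S‖₂² < ν ‖S‖₂²` when `S ≠ 0` and `rank S < ν`. -/

open scoped Matrix.Norms.L2Operator

namespace Matrix

variable {𝕜 n : Type*} [RCLike 𝕜] [Fintype n] [DecidableEq n]

theorem IsHermitian.eigenvalues_le_l2_opNorm {A : Matrix n n 𝕜} (hA : A.IsHermitian) (i : n) :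
    hA.eigenvalues i ≤ ‖A‖ := by
  have hv : ‖hA.eigenvectorBasis i‖ = 1 := hA.eigenvectorBasis.orthonormal.1 i
  calc hA.eigenvalues i ≤ ‖hA.eigenvalues i • hA.eigenvectorBasis i‖ := by
        rw [norm_smul, hv, mul_one]; exact Real.le_norm_self _
    _ = ‖(EuclideanSpace.equiv n 𝕜).symm (A *ᵥ hA.eigenvectorBasis i)‖ := by
        rw [hA.mulVec_eigenvectorBasis]; rfl
    _ ≤ ‖A‖ := by simpa [hv] using A.l2_opNorm_mulVec (hA.eigenvectorBasis i)

open Finset in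
theorem IsHermitian.trace_le_rank_mul_l2_opNorm {A : Matrix n n ℝ} (hA : A.IsHermitian) :
    A.trace ≤ A.rank * ‖A‖ := by
  calc A.trace = ∑ i with hA.eigenvalues i ≠ 0, hA.eigenvalues i := by
        rw [hA.trace_eq_sum_eigenvalues, sum_filter_ne_zero]; rfl
    _ ≤ #{i | hA.eigenvalues i ≠ 0} • ‖A‖ :=
        sum_le_card_nsmul _ _ _ fun i _ ↦ hA.eigenvalues_le_l2_opNorm i
    _ = A.rank * ‖A‖ := by
        rw [hA.rank_eq_card_non_zero_eigs, Fintype.card_subtype, nsmul_eq_mul]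

end Matrix

section RealMatrix

variable {n m : ℕ}

theorem opNorm_eq_l2_opNorm (S : Matrix (Fin n) (Fin m) ℝ) : opNorm S = ‖S‖ := rfl

theorem frobNorm_sq_eq_trace (S : Matrix (Fin n) (Fin m) ℝ) :
    frobNorm S ^ 2 = (Sᵀ * S).trace := by
  rw [frobNorm, Real.sq_sqrt (by positivity), Finset.sum_comm]
  simp only [Matrix.trace, Matrix.diag, Matrix.mul_apply, Matrix.transpose_apply, sq]

theorem frobNorm_sq_le_rank_mul_opNorm_sq (S : Matrix (Fin n) (Fin m) ℝ) :
    frobNorm S ^ 2 ≤ S.rank * opNorm S ^ 2 := by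
  rw [frobNorm_sq_eq_trace, opNorm_eq_l2_opNorm, ← rank_transpose_mul_self, sq,
    ← l2_opNorm_conjTranspose_mul_self, conjTranspose_eq_transpose_of_trivial]
  exact (gram_isHermitian S).trace_le_rank_mul_l2_opNorm

theorem opNorm_pos {S : Matrix (Fin n) (Fin m) ℝ} (hS : S ≠ 0) : 0 < opNorm S := by
  rw [opNorm_eq_l2_opNorm]
  exact norm_pos_iff.mpr hS

end RealMatrix

/-- Let `S ∈ ℝ^{n×m}` with `S ≠ 0`, `ν = min n m`, and suppose
`rank S < ν`. Then `r(S) > 0`. -/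
theorem reg_pos_of_rank_lt {n m : ℕ} (S : Matrix (Fin n) (Fin m) ℝ)
    (hS : S ≠ 0) (hrank : S.rank < min n m) :
    0 < reg S := by
  have hrank' : (S.rank : ℝ) < min (n : ℝ) m := by exact_mod_cast hrank
  have hS' : 0 < opNorm S ^ 2 := pow_pos (opNorm_pos hS) 2
  have hν : (0 : ℝ) < min (n : ℝ) m := (Nat.cast_nonneg _).trans_lt hrank'
  rw [reg, sub_pos]
  calc 1 / (2 * min (n : ℝ) m) * frobNorm S ^ 2
      ≤ 1 / (2 * min (n : ℝ) m) * (S.rank * opNorm S ^ 2) := by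
        gcongr; exact frobNorm_sq_le_rank_mul_opNorm_sq S
    _ < 1 / (2 * min (n : ℝ) m) * (min (n : ℝ) m * opNorm S ^ 2) := by gcongr
    _ = 1 / 2 * opNorm S ^ 2 := by field_simp
end

section
/- For every nonzero S ∈ ℝ^{n×m} with ν = min(n,m), the condition number satisfies κ(S) ≤ exp( ν · r(S) / σ_min>0(S)² ). -/
open Matrix

/-!
Write `a = ‖S‖₂` and `s = σ_min>0(S)`. The squared Frobenius norm is the trace of `SᵀS`, i.e. the
sum of its eigenvalues; at most `ν ≥ rank S` of them are nonzero, each is at most `a²`, and one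
of them is `s²`. Hence `‖S‖_F² ≤ s² + (ν - 1) a²`, which says `ν r(S) ≥ (a² - s²) / 2`.
As `κ(S) ≤ x := a / s`, it remains to see `x ≤ exp ((x² - 1) / 2)`, which follows from
`1 + y ≤ exp y` and `2x ≤ x² + 1`.
-/

open Finset in
theorem sum_le_add_mul_of_card_ne_zero_le {ι : Type*} [Fintype ι] [DecidableEq ι] {f : ι → ℝ}
    {b : ℝ} {N : ℕ} (hf : ∀ i, f i ≤ b) (hb : 0 ≤ b) (hN : #{i | f i ≠ 0} ≤ N) {k : ι}
    (hk : f k ≠ 0) :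
    ∑ i, f i ≤ f k + (N - 1) * b := by
  set s : Finset ι := {i | f i ≠ 0}
  have hks : k ∈ s := by simpa [s] using hk
  have hcard : (#(s.erase k) : ℝ) ≤ N - 1 := by
    rw [card_erase_of_mem hks, Nat.cast_sub (card_pos.2 ⟨k, hks⟩), Nat.cast_one]
    gcongr
  calc ∑ i, f i = f k + ∑ i ∈ s.erase k, f i := by
        rw [add_sum_erase _ _ hks, sum_filter_ne_zero]
  _ ≤ f k + #(s.erase k) * b := by
        gcongr
        simpa using sum_le_card_nsmul _ _ b fun i _ ↦ hf i
  _ ≤ f k + (N - 1) * b := by gcongr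

section Gram

variable {ι κ : Type*} [Fintype ι] [Fintype κ] [DecidableEq κ] {S : Matrix ι κ ℝ}

theorem eigenvalues_transpose_mul_self_nonneg (hS : (Sᵀ * S).IsHermitian) (k : κ) :
    0 ≤ hS.eigenvalues k :=
  (posSemidef_conjTranspose_mul_self S).eigenvalues_nonneg k

theorem eigenvalues_transpose_mul_self_le (hS : (Sᵀ * S).IsHermitian) (k : κ) :
    hS.eigenvalues k ≤ ‖(toEuclideanLin S).toContinuousLinearMap‖ ^ 2 := by
  set T := (toEuclideanLin S).toContinuousLinearMap
  set v := hS.eigenvectorBasis k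
  have hv : ‖v‖ = 1 := hS.eigenvectorBasis.orthonormal.1 k
  calc hS.eigenvalues k = ‖T v‖ ^ 2 := by
        rw [hS.eigenvalues_eq, ← real_inner_self_eq_norm_sq,
          EuclideanSpace.inner_eq_star_dotProduct]
        simp [T, v, ← mulVec_mulVec, dotProduct_mulVec, vecMul_transpose]
  _ ≤ (‖T‖ * ‖v‖) ^ 2 := by gcongr; exact T.le_opNorm v
  _ = ‖T‖ ^ 2 := by rw [hv, mul_one]

theorem sum_eigenvalues_transpose_mul_self (hS : (Sᵀ * S).IsHermitian) :
    ∑ k, hS.eigenvalues k = ∑ i, ∑ j, S i j ^ 2 := by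
  have htr := hS.trace_eq_sum_eigenvalues
  simp only [RCLike.ofReal_real_eq_id, id] at htr
  rw [← htr, trace, Finset.sum_comm]
  simp [mul_apply, sq]

open Finset in
theorem card_eigenvalues_transpose_mul_self_ne_zero_le (hS : (Sᵀ * S).IsHermitian) :
    #{k | hS.eigenvalues k ≠ 0} ≤ min (Fintype.card ι) (Fintype.card κ) := by
  rw [← Fintype.card_subtype, ← hS.rank_eq_card_non_zero_eigs, rank_transpose_mul_self]
  exact le_min S.rank_le_card_height S.rank_le_card_width

end Gram

theorem le_exp_sq_sub_one_div_two (x : ℝ) : x ≤ Real.exp ((x ^ 2 - 1) / 2) := by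
  nlinarith [Real.add_one_le_exp ((x ^ 2 - 1) / 2), sq_nonneg (x - 1)]

section SingularValues

variable {n m : ℕ} (S : Matrix (Fin n) (Fin m) ℝ)

theorem exists_sq_svals_eq_eigenvalues (i : Fin (min n m)) :
    ∃ k, svals S i ^ 2 = (gram_isHermitian S).eigenvalues k :=
  ⟨_, Real.sq_sqrt (eigenvalues_transpose_mul_self_nonneg _ _)⟩

theorem svals_le_opNorm (i : Fin (min n m)) : svals S i ≤ opNorm S := by
  obtain ⟨k, hk⟩ := exists_sq_svals_eq_eigenvalues S i
  refine abs_le_of_sq_le_sq' ?_ (norm_nonneg _) |>.2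
  exact hk ▸ eigenvalues_transpose_mul_self_le _ k

theorem sigmaMax_le_opNorm : sigmaMax S ≤ opNorm S :=
  Real.iSup_le (svals_le_opNorm S) (norm_nonneg _)

theorem sigmaMinPos_eq_zero_or_mem :
    sigmaMinPos S = 0 ∨ sigmaMinPos S ∈ {x | (∃ i, svals S i = x) ∧ 0 < x} := by
  rcases Set.eq_empty_or_nonempty {x | (∃ i, svals S i = x) ∧ 0 < x} with h | h
  · exact .inl (by rw [sigmaMinPos, h, Real.sInf_empty])
  · exact .inr (h.csInf_mem ((Set.finite_range (svals S)).subset fun _ hx ↦ hx.1))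

theorem frobNorm_sq_le {i : Fin (min n m)} (hi : 0 < svals S i) :
    frobNorm S ^ 2 ≤ svals S i ^ 2 + ((min n m : ℝ) - 1) * opNorm S ^ 2 := by
  obtain ⟨k, hk⟩ := exists_sq_svals_eq_eigenvalues S i
  have hcard := card_eigenvalues_transpose_mul_self_ne_zero_le (gram_isHermitian S)
  simp only [Fintype.card_fin] at hcard
  rw [frobNorm, Real.sq_sqrt (by positivity),
    ← sum_eigenvalues_transpose_mul_self (gram_isHermitian S), hk]
  exact_mod_cast sum_le_add_mul_of_card_ne_zero_le (eigenvalues_transpose_mul_self_le _)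
    (sq_nonneg _) hcard (hk ▸ (pow_pos hi 2).ne')

theorem sq_opNorm_sub_sq_svals_le {i : Fin (min n m)} (hi : 0 < svals S i) :
    (opNorm S ^ 2 - svals S i ^ 2) / 2 ≤ (min n m : ℝ) * reg S := by
  have hν : (0 : ℝ) < (min n m : ℝ) := by rw [← Nat.cast_min]; exact_mod_cast i.pos
  have hfrob := frobNorm_sq_le S hi
  rw [reg]
  field_simp
  linarith

end SingularValues

theorem kappa_le_exp_reg_general {n m : ℕ} (S : Matrix (Fin n) (Fin m) ℝ) :
    kappa S ≤ Real.exp ((min n m : ℝ) * reg S / sigmaMinPos S ^ 2) := by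
  rcases sigmaMinPos_eq_zero_or_mem S with h0 | ⟨⟨i, hi⟩, hpos⟩
  -- no positive singular value: `sigmaMinPos S = sInf ∅ = 0`, so `kappa S = 0` by `x / 0 = 0`
  · rw [kappa, h0, div_zero]
    exact (Real.exp_pos _).le
  calc kappa S ≤ opNorm S / sigmaMinPos S :=
        div_le_div_of_nonneg_right (sigmaMax_le_opNorm S) hpos.le
  _ ≤ Real.exp (((opNorm S / sigmaMinPos S) ^ 2 - 1) / 2) := le_exp_sq_sub_one_div_two _
  _ = Real.exp ((opNorm S ^ 2 - sigmaMinPos S ^ 2) / 2 / sigmaMinPos S ^ 2) := by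
        field_simp
  _ ≤ Real.exp ((min n m : ℝ) * reg S / sigmaMinPos S ^ 2) := by
        gcongr
        exact hi ▸ sq_opNorm_sub_sq_svals_le S (hi ▸ hpos)

/-- For every nonzero `S ∈ ℝ^{n×m}` with `ν = min n m`, the condition
number satisfies `κ(S) ≤ exp(ν · r(S) / σ_min>0(S)²)`. -/
theorem kappa_le_exp_reg {n m : ℕ} (S : Matrix (Fin n) (Fin m) ℝ) (hS : S ≠ 0) :
    kappa S ≤ Real.exp ((min n m : ℝ) * reg S / sigmaMinPos S ^ 2) :=
  kappa_le_exp_reg_general S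
end

section
/- Let S ∈ ℝ^{n×m} be nonzero with ν = min(n,m) ≥ 2, singular value decomposition S = U·Diag(σ₁,…,σ_ν)·Vᵀ (U, V orthogonal, u₁, v₁ the first columns), and suppose σ₁ = α·σ₂ with α > 1. Let λ > 0 satisfy 1/α < 1 − λ/(1 + λ/ν) and let S' = S − λ·(σ₁·u₁v₁ᵀ − (1/ν)·S). Then κ(S') = (1 − λ/(1 + λ/ν))·κ(S). -/
open Matrix

/-!
Up to the factor `c = 1 + λ/ν`, the step only lowers the top singular value:
`S' = c • S - λσ₁ • u₁v₁ᵀ = U · Diag(d) · Vᵀ` with `d = (c - λ)σ₁, cσ₂, …, cσ_ν`.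
The hypothesis on `λ` is exactly `cσ₂ ≤ (c - λ)σ₁`, so `d` is still sorted and nonnegative,
and this is a singular value decomposition of `S'`. Hence `σ_max(S') = (c - λ)σ₁`, while
`σ₂ > 0` keeps the smallest nonzero singular value off the first index, so it is `c` times
that of `S`.
-/

theorem Matrix.IsHermitian.map_eigenvalues_eq_of_conj_diagonal {ι : Type*} [Fintype ι]
    [DecidableEq ι] {A V : Matrix ι ι ℝ} (hA : A.IsHermitian) (hV : Vᵀ * V = 1) {e : ι → ℝ}
    (hAe : A = V * diagonal e * Vᵀ) :
    Finset.univ.val.map hA.eigenvalues = Finset.univ.val.map e := by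
  have hchar : A.charpoly = (diagonal e).charpoly := by
    rw [hAe, Matrix.mul_assoc, charpoly_mul_comm, Matrix.mul_assoc, hV, Matrix.mul_one]
  have hroots := congrArg Polynomial.roots hchar
  rw [hA.roots_charpoly_eq_eigenvalues, charpoly_diagonal, Polynomial.roots_prod _ _
    (by simp [Finset.prod_ne_zero_iff, Polynomial.X_sub_C_ne_zero])] at hroots
  simpa using hroots

theorem Tuple.comp_sort_eq_comp_rev_of_antitone {ν : ℕ} {f g : Fin ν → ℝ} (hg : Antitone g)
    (h : Finset.univ.val.map f = Finset.univ.val.map g) :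
    f ∘ Tuple.sort f = g ∘ Fin.rev := by
  have hmono : Monotone (g ∘ Fin.rev) := hg.comp Fin.rev_anti
  apply List.ofFn_injective
  refine List.Perm.eq_of_sortedLE (Tuple.monotone_sort f).sortedLE_ofFn hmono.sortedLE_ofFn ?_
  have hfg : List.Perm (List.ofFn f) (List.ofFn g) := by
    rw [← Multiset.coe_eq_coe, ← Fin.univ_val_map, ← Fin.univ_val_map, h]
  exact ((Tuple.sort f).ofFn_comp_perm f).trans (hfg.trans (Fin.revPerm.ofFn_comp_perm g).symm)

section DiagRect

variable {n m : ℕ}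

theorem diagRect_sub (a b : Fin (min n m) → ℝ) :
    diagRect (n := n) (m := m) (a - b) = diagRect a - diagRect b := by
  ext i j
  simp only [diagRect, of_apply, Matrix.sub_apply, Pi.sub_apply]
  split_ifs <;> simp

theorem diagRect_smul (c : ℝ) (a : Fin (min n m) → ℝ) :
    diagRect (n := n) (m := m) (c • a) = c • diagRect a := by
  ext i j
  simp only [diagRect, of_apply, Matrix.smul_apply, Pi.smul_apply]
  split_ifs <;> simp

theorem diagRect_transpose_mul_diagRect (a b : Fin (min n m) → ℝ) :
    (diagRect (n := n) (m := m) a)ᵀ * diagRect b =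
      diagonal fun j : Fin m => if h : (j : ℕ) < min n m then a ⟨j, h⟩ * b ⟨j, h⟩ else 0 := by
  ext j k
  simp only [mul_apply, transpose_apply, diagRect, of_apply, diagonal_apply]
  by_cases hj : (j : ℕ) < min n m
  · rw [Finset.sum_eq_single ⟨j, by omega⟩ (fun i _ hi => by
      rw [dif_neg fun h => hi (Fin.ext h), zero_mul]) (by simp)]
    by_cases hjk : j = k
    · subst hjk; simp [hj]
    · simp [hjk, Fin.val_ne_of_ne hjk]
  · refine (Finset.sum_eq_zero fun i _ => ?_).trans (by simp [hj])
    rw [dif_neg (by omega), zero_mul]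

theorem mul_diagRect_single_mul_transpose (U : Matrix (Fin n) (Fin n) ℝ)
    (V : Matrix (Fin m) (Fin m) ℝ) (k : Fin (min n m)) :
    U * diagRect (Pi.single k 1) * Vᵀ =
      of fun i j => U i ⟨k, by omega⟩ * V j ⟨k, by omega⟩ := by
  ext i j
  have hD : diagRect (n := n) (m := m) (Pi.single k 1) = single ⟨k, by omega⟩ ⟨k, by omega⟩ 1 := by
    ext p q
    simp only [diagRect, of_apply, single_apply, Pi.single_apply, Fin.ext_iff]
    grind
  rw [hD]
  simp [mul_apply, single_apply, ite_and, Finset.sum_ite_eq]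

theorem mul_diagRect_smul_sub_single_mul_transpose (U : Matrix (Fin n) (Fin n) ℝ)
    (V : Matrix (Fin m) (Fin m) ℝ) (σ : Fin (min n m) → ℝ) (k : Fin (min n m)) (a b : ℝ) :
    U * diagRect (a • σ - b • Pi.single k 1) * Vᵀ =
      a • (U * diagRect σ * Vᵀ) - b • of fun i j => U i ⟨k, by omega⟩ * V j ⟨k, by omega⟩ := by
  rw [diagRect_sub, diagRect_smul, diagRect_smul, Matrix.mul_sub, Matrix.sub_mul,
    Matrix.mul_smul, Matrix.smul_mul, Matrix.mul_smul, Matrix.smul_mul,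
    mul_diagRect_single_mul_transpose]

end DiagRect

section SingularValues

variable {n m : ℕ}

theorem svals_antitone_s11 (S : Matrix (Fin n) (Fin m) ℝ) : Antitone (svals S) := fun i j hij =>
  Real.sqrt_le_sqrt <| Tuple.monotone_sort (gram_isHermitian S).eigenvalues <|
    Fin.mk_le_mk.mpr (by have := Fin.le_def.mp hij; omega)

theorem sigmaMax_eq_svals_zero (S : Matrix (Fin n) (Fin m) ℝ) (h : 0 < min n m) :
    sigmaMax S = svals S ⟨0, h⟩ :=
  have : Nonempty (Fin (min n m)) := ⟨⟨0, h⟩⟩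
  le_antisymm (ciSup_le fun _ => svals_antitone_s11 S (Fin.mk_le_mk.mpr (Nat.zero_le _)))
    (le_ciSup (Set.finite_range _).bddAbove _)

theorem svals_mul_diagRect_mul_transpose {U : Matrix (Fin n) (Fin n) ℝ}
    {V : Matrix (Fin m) (Fin m) ℝ} (hU : Uᵀ * U = 1) (hV : Vᵀ * V = 1)
    {d : Fin (min n m) → ℝ} (hd : Antitone d) (hd₀ : ∀ i, 0 ≤ d i) :
    svals (U * diagRect d * Vᵀ) = d := by
  set S := U * diagRect d * Vᵀ
  set e : Fin m → ℝ := fun j => if h : (j : ℕ) < min n m then d ⟨j, h⟩ * d ⟨j, h⟩ else 0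
  have hgram : Sᵀ * S = V * diagonal e * Vᵀ := by
    simp only [S, transpose_mul, transpose_transpose, Matrix.mul_assoc]
    rw [← Matrix.mul_assoc Uᵀ, hU, Matrix.one_mul, ← Matrix.mul_assoc (diagRect d)ᵀ,
      diagRect_transpose_mul_diagRect]
  have he : Antitone e := by
    intro j k hjk
    simp only [e]
    split_ifs with hk hj hj
    · exact mul_self_le_mul_self (hd₀ _) (hd (Fin.mk_le_mk.mpr hjk))
    · omega
    · exact mul_self_nonneg _
    · exact le_rfl
  have hsorted := Tuple.comp_sort_eq_comp_rev_of_antitone he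
    ((gram_isHermitian S).map_eigenvalues_eq_of_conj_diagonal hV hgram)
  funext i
  have hrev : Fin.rev (⟨m - 1 - i, by omega⟩ : Fin m) = ⟨i, by omega⟩ := by
    ext; simp only [Fin.val_rev]; omega
  show Real.sqrt ((_ ∘ _) _) = _
  rw [hsorted, Function.comp_apply, hrev]
  simp only [e, dif_pos i.isLt]
  exact Real.sqrt_mul_self (hd₀ i)

theorem svals_zero_pos_of_ne_zero {S : Matrix (Fin n) (Fin m) ℝ}
    {U : Matrix (Fin n) (Fin n) ℝ} {V : Matrix (Fin m) (Fin m) ℝ}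
    (hSVD : S = U * diagRect (svals S) * Vᵀ) (hS : S ≠ 0) (h : 0 < min n m) :
    0 < svals S ⟨0, h⟩ := by
  by_contra! hle
  have hzero : svals S = 0 := funext fun i =>
    le_antisymm ((svals_antitone_s11 S (Fin.mk_le_mk.mpr (Nat.zero_le _))).trans hle)
      (Real.sqrt_nonneg _)
  apply hS
  rw [hSVD, hzero, ← zero_smul ℝ (0 : Fin (min n m) → ℝ), diagRect_smul]
  simp

end SingularValues

section

variable {ν : ℕ}

theorem sInf_pos_range_eq_of_antitone {d : Fin ν → ℝ} (hd : Antitone d) {k : Fin ν}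
    (hk : 0 < d k) (hmax : ∀ j, 0 < d j → j ≤ k) :
    sInf {x | (∃ i, d i = x) ∧ 0 < x} = d k := by
  refine le_antisymm (csInf_le ⟨0, fun x hx => hx.2.le⟩ ⟨⟨k, rfl⟩, hk⟩)
    (le_csInf ⟨d k, ⟨k, rfl⟩, hk⟩ ?_)
  rintro x ⟨⟨i, rfl⟩, hx⟩
  exact hd (hmax i hx)

theorem antitone_smul_sub_single {σ : Fin ν → ℝ} (hσ : Antitone σ) (h1 : 1 < ν) {c b : ℝ}
    (hc : 0 ≤ c) (hgap : c * σ ⟨1, h1⟩ ≤ c * σ ⟨0, by omega⟩ - b) :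
    Antitone (c • σ - b • Pi.single ⟨0, by omega⟩ 1) := by
  intro i j hij
  have hσc : ∀ {i j}, i ≤ j → c * σ j ≤ c * σ i := fun h => mul_le_mul_of_nonneg_left (hσ h) hc
  rcases i with ⟨_ | i, hi⟩ <;> rcases j with ⟨_ | j, hj⟩
  · exact le_rfl
  · simpa using (hσc (Fin.mk_le_mk.mpr (by omega : 1 ≤ j + 1))).trans hgap
  · simp at hij
  · simpa using hσc hij

theorem smul_sub_single_nonneg {σ : Fin ν → ℝ} (hσ₀ : ∀ i, 0 ≤ σ i)
    (h1 : 1 < ν) {c b : ℝ} (hc : 0 ≤ c) (hgap : c * σ ⟨1, h1⟩ ≤ c * σ ⟨0, by omega⟩ - b)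
    (i : Fin ν) : 0 ≤ (c • σ - b • Pi.single ⟨0, by omega⟩ 1 : Fin ν → ℝ) i := by
  rcases i with ⟨_ | i, _⟩
  · simpa using (mul_nonneg hc (hσ₀ _)).trans hgap
  · simpa using mul_nonneg hc (hσ₀ _)

theorem sInf_pos_range_smul_sub_single {σ : Fin ν → ℝ} (hσ : Antitone σ) (h1 : 1 < ν)
    (hσ1 : 0 < σ ⟨1, h1⟩) {c b : ℝ} (hc : 0 < c)
    (hgap : c * σ ⟨1, h1⟩ ≤ c * σ ⟨0, by omega⟩ - b) :
    sInf {x | (∃ i, (c • σ - b • Pi.single ⟨0, by omega⟩ 1 : Fin ν → ℝ) i = x) ∧ 0 < x} =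
      c * sInf {x | (∃ i, σ i = x) ∧ 0 < x} := by
  set P := Finset.univ.filter fun i => 0 < σ i
  have hP : P.Nonempty := ⟨⟨1, h1⟩, by simp [P, hσ1]⟩
  have hK : 0 < σ (P.max' hP) := (Finset.mem_filter.mp (P.max'_mem hP)).2
  have hKmax : ∀ j, 0 < σ j → j ≤ P.max' hP := fun j hj => P.le_max' j (by simp [P, hj])
  have hK0 : (P.max' hP : ℕ) ≠ 0 := by
    have := Fin.le_def.mp (hKmax _ hσ1); simp only at this; omega
  have hdK : (c • σ - b • Pi.single ⟨0, by omega⟩ 1 : Fin ν → ℝ) (P.max' hP) =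
      c * σ (P.max' hP) := by
    simp [Fin.ext_iff, hK0]
  rw [sInf_pos_range_eq_of_antitone hσ hK hKmax, sInf_pos_range_eq_of_antitone
    (antitone_smul_sub_single hσ h1 hc.le hgap) (hdK ▸ mul_pos hc hK), hdK]
  intro j hj
  rcases j with ⟨_ | j, _⟩
  · exact Fin.le_def.mpr (Nat.zero_le _)
  · exact hKmax _ (pos_of_mul_pos_right (by simpa using hj) hc.le)

end

/-- Let `S ∈ ℝ^{n×m}` be nonzero with `ν = min n m ≥ 2`, singular
value decomposition `S = U·Diag(σ₁,…,σ_ν)·Vᵀ` (`U`, `V` orthogonal, `u₁`, `v₁` the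
first columns), and suppose `σ₁ = α·σ₂` with `α > 1`. Let `λ > 0` satisfy
`1/α < 1 − λ/(1 + λ/ν)` and let `S' = S − λ·(σ₁·u₁v₁ᵀ − (1/ν)·S)`. Then
`κ(S') = (1 − λ/(1 + λ/ν))·κ(S)`. -/
theorem kappa_descent_case_one {n m : ℕ} (hν : 2 ≤ min n m)
    (S : Matrix (Fin n) (Fin m) ℝ) (hS : S ≠ 0)
    (U : Matrix (Fin n) (Fin n) ℝ) (V : Matrix (Fin m) (Fin m) ℝ)
    (hU : Uᵀ * U = 1) (hV : Vᵀ * V = 1)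
    (hSVD : S = U * diagRect (svals S) * Vᵀ)
    (α : ℝ) (hα : 1 < α)
    (hσ : svals S ⟨0, by omega⟩ = α * svals S ⟨1, by omega⟩)
    (lam : ℝ) (hlam : 0 < lam)
    (hcase : 1 / α < 1 - lam / (1 + lam / (min n m : ℝ))) :
    kappa (S - lam • (svals S ⟨0, by omega⟩ •
        Matrix.of (fun i j => U i ⟨0, by omega⟩ * V j ⟨0, by omega⟩)
      - ((min n m : ℝ))⁻¹ • S))
    = (1 - lam / (1 + lam / (min n m : ℝ))) * kappa S := by
  have h0 : 0 < min n m := by omega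
  have h1 : 1 < min n m := by omega
  set σ := svals S
  set c : ℝ := 1 + lam / (min n m : ℝ)
  have hc : 0 < c := by positivity
  have hσ0 : 0 < σ ⟨0, h0⟩ := svals_zero_pos_of_ne_zero hSVD hS h0
  have hσ1 : 0 < σ ⟨1, h1⟩ := pos_of_mul_pos_right (hσ ▸ hσ0) (by linarith)
  have hgap : c * σ ⟨1, h1⟩ ≤ c * σ ⟨0, h0⟩ - lam * σ ⟨0, h0⟩ := by
    -- `hcase` says `c < α (c - λ)`; multiply by `σ₂ = σ₁ / α`.
    rw [one_sub_div hc.ne', div_lt_div_iff₀ (by linarith) hc] at hcase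
    rw [hσ]
    nlinarith
  set d : Fin (min n m) → ℝ := c • σ - (lam * σ ⟨0, h0⟩) • Pi.single ⟨0, h0⟩ 1
  have hS' : S - lam • (σ ⟨0, h0⟩ • Matrix.of (fun i j => U i ⟨0, by omega⟩ * V j ⟨0, by omega⟩)
      - ((min n m : ℝ))⁻¹ • S) = U * diagRect d * Vᵀ := by
    rw [mul_diagRect_smul_sub_single_mul_transpose, ← hSVD]
    module
  have hd : svals (U * diagRect d * Vᵀ) = d := svals_mul_diagRect_mul_transpose hU hV
    (antitone_smul_sub_single (svals_antitone_s11 S) h1 hc.le hgap)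
    (smul_sub_single_nonneg (fun _ => Real.sqrt_nonneg _) h1 hc.le hgap)
  rw [hS', kappa, kappa, sigmaMax_eq_svals_zero _ h0, sigmaMax_eq_svals_zero _ h0, sigmaMinPos,
    sigmaMinPos, hd, sInf_pos_range_smul_sub_single (svals_antitone_s11 S) h1 hσ1 hc hgap]
  simp only [d, σ, Pi.sub_apply, Pi.smul_apply, Pi.single_eq_same, smul_eq_mul]
  field_simp
end
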